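/- The genus expanded Schur functions S_λ{p,z} = Σ_{Γ'⊢d} z^{−d−l(Γ')}(dim λ/d!)φ_λ(Γ')p_{Γ'}, λ ⊢ d, are linearly independent over ℂ(z), and simultaneous eigenfunctions of all normalized operators Ŵ(Δ,z) with eigenvalue φ_λ(Δ): for d = 2, the operator Ŵ((2),z) = z⁻¹W((2),z) = (z/2)p_2∂_{p_1}² + z⁻¹p_1²∂_{p_2} satisfies Ŵ((2),z)S_{(2)}{p,z} = S_{(2)}{p,z} and Ŵ((2),z)S_{(1,1)}{p,z} = −S_{(1,1)}{p,z}. -/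
import Mathlib


open MvPolynomial

/-- The indeterminate `z`. -/
noncomputable def z : RatFunc ℂ := RatFunc.X

/-- The normalized genus expanded cut-and-join operator for `d = 2`, `Δ = (2)`:
`Ŵ((2),z) = z⁻¹W((2),z) = (z/2)p₂∂₁² + z⁻¹p₁²∂₂`, with `p₁ = X 0`, `p₂ = X 1`. -/
noncomputable def What (f : MvPolynomial (Fin 2) (RatFunc ℂ)) :
    MvPolynomial (Fin 2) (RatFunc ℂ) :=
  C (z / 2) * X 1 * pderiv 0 (pderiv 0 f) + C z⁻¹ * (X 0) ^ 2 * pderiv 1 f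

/-- The genus expanded Schur function `S_{(2)}{p,z} = (1/2)z⁻⁴p₁² + (1/2)z⁻³p₂`. -/
noncomputable def S2 : MvPolynomial (Fin 2) (RatFunc ℂ) :=
  C (z ^ (-4 : ℤ) / 2) * (X 0) ^ 2 + C (z ^ (-3 : ℤ) / 2) * X 1

/-- The genus expanded Schur function `S_{(1,1)}{p,z} = (1/2)z⁻⁴p₁² − (1/2)z⁻³p₂`. -/
noncomputable def S11 : MvPolynomial (Fin 2) (RatFunc ℂ) :=
  C (z ^ (-4 : ℤ) / 2) * (X 0) ^ 2 - C (z ^ (-3 : ℤ) / 2) * X 1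

instance : CharZero (RatFunc ℂ) :=
  charZero_of_injective_algebraMap (IsFractionRing.injective (Polynomial ℂ) (RatFunc ℂ))

lemma hz : z ≠ 0 := RatFunc.X_ne_zero

lemma czw : z * (z ^ 4)⁻¹ = (z ^ 3)⁻¹ := by
  rw [pow_succ, mul_inv, ← mul_assoc, mul_comm z, mul_assoc, mul_inv_cancel₀ hz, mul_one]

lemma czw2 : z⁻¹ * (z ^ 3)⁻¹ = (z ^ 4)⁻¹ := by
  rw [← czw, ← mul_assoc, inv_mul_cancel₀ hz, one_mul]

lemma c1 : z / 2 * (z ^ 4)⁻¹ = (z ^ 3)⁻¹ / 2 := by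
  rw [div_mul_eq_mul_div, czw]

lemma c2 : z⁻¹ * ((z ^ 3)⁻¹ / 2) = (z ^ 4)⁻¹ / 2 := by
  rw [mul_div_assoc', czw2]

lemma sN2 : S2 = C ((z ^ 4)⁻¹ / 2) * (X 0) ^ 2 + C ((z ^ 3)⁻¹ / 2) * X 1 := by
  simp [S2, zpow_ofNat]

lemma sN11 : S11 = C ((z ^ 4)⁻¹ / 2) * (X 0) ^ 2 - C ((z ^ 3)⁻¹ / 2) * X 1 := by
  simp [S11, zpow_ofNat]

lemma pdC2 : pderiv (0 : Fin 2) (2 : MvPolynomial (Fin 2) (RatFunc ℂ)) = 0 := by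
  rw [show (2 : MvPolynomial (Fin 2) (RatFunc ℂ)) = C 2 from (map_ofNat _ 2).symm, pderiv_C]

lemma d1 : pderiv (0 : Fin 2) (pderiv 0 S2) = C ((z ^ 4)⁻¹) := by
  rw [sN2]
  simp [pderiv_C_mul]
  rw [pdC2, mul_zero, add_zero, mul_two, ← C_add, add_halves]

lemma d2 : pderiv (1 : Fin 2) S2 = C ((z ^ 3)⁻¹ / 2) := by
  rw [sN2]; simp

lemma e1 : pderiv (0 : Fin 2) (pderiv 0 S11) = C ((z ^ 4)⁻¹) := by
  rw [sN11]
  simp [pderiv_C_mul]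
  rw [pdC2, mul_zero, add_zero, mul_two, ← C_add, add_halves]

lemma e2 : pderiv (1 : Fin 2) S11 = -C ((z ^ 3)⁻¹ / 2) := by
  rw [sN11]; simp

lemma pc1 : (C (z / 2) * C ((z ^ 4)⁻¹) : MvPolynomial (Fin 2) (RatFunc ℂ)) =
    C ((z ^ 3)⁻¹ / 2) := by rw [← C_mul, c1]

lemma pc2 : (C z⁻¹ * C ((z ^ 3)⁻¹ / 2) : MvPolynomial (Fin 2) (RatFunc ℂ)) =
    C ((z ^ 4)⁻¹ / 2) := by rw [← C_mul, c2]

lemma eig2 : What S2 = S2 := by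
  rw [What, d1, d2, sN2]
  linear_combination (X 1 : MvPolynomial (Fin 2) (RatFunc ℂ)) * pc1 + (X 0 : MvPolynomial (Fin 2) (RatFunc ℂ)) ^ 2 * pc2

lemma eig11 : What S11 = -S11 := by
  rw [What, e1, e2, sN11]
  linear_combination (X 1 : MvPolynomial (Fin 2) (RatFunc ℂ)) * pc1 - (X 0 : MvPolynomial (Fin 2) (RatFunc ℂ)) ^ 2 * pc2

lemma coeff2 : coeff (Finsupp.single (0 : Fin 2) 2) S2 = z ^ (-4 : ℤ) / 2 ∧
    coeff (Finsupp.single (1 : Fin 2) 1) S2 = z ^ (-3 : ℤ) / 2 ∧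
    coeff (Finsupp.single (0 : Fin 2) 2) S11 = z ^ (-4 : ℤ) / 2 ∧
    coeff (Finsupp.single (1 : Fin 2) 1) S11 = -(z ^ (-3 : ℤ) / 2) := by
  refine ⟨?_, ?_, ?_, ?_⟩ <;>
    simp [S2, S11, coeff_X', coeff_X_pow, Finsupp.single_eq_single_iff]

/-- The genus expanded Schur functions for `d = 2` are linearly independent over
`ℂ(z)` and are simultaneous eigenfunctions of the normalized operator `Ŵ((2),z)`
with eigenvalues `φ_λ((2))`: `Ŵ S_{(2)} = S_{(2)}` and `Ŵ S_{(1,1)} = −S_{(1,1)}`. -/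
theorem stmt15 :
    LinearIndependent (RatFunc ℂ) ![S2, S11] ∧
    What S2 = S2 ∧ What S11 = -S11 := by
  refine ⟨?_, eig2, eig11⟩
  rw [LinearIndependent.pair_iff]
  intro s t hst
  have hc : (z ^ (-3 : ℤ) / 2 : RatFunc ℂ) ≠ 0 := by
    apply div_ne_zero (zpow_ne_zero _ hz) two_ne_zero
  have hc4 : (z ^ (-4 : ℤ) / 2 : RatFunc ℂ) ≠ 0 := by
    apply div_ne_zero (zpow_ne_zero _ hz) two_ne_zero
  have h1 := congrArg (coeff (Finsupp.single (0 : Fin 2) 2)) hst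
  have h2 := congrArg (coeff (Finsupp.single (1 : Fin 2) 1)) hst
  simp only [coeff_add, coeff_smul, coeff2.1, coeff2.2.1, coeff2.2.2.1, coeff2.2.2.2,
    coeff_zero, smul_eq_mul] at h1 h2
  have hs : s + t = 0 :=
    mul_left_cancel₀ hc4
      (show (z ^ (-4 : ℤ) / 2) * (s + t) = (z ^ (-4 : ℤ) / 2) * 0 from by
        rw [mul_zero]; linear_combination h1)
  have ht : s - t = 0 :=
    mul_left_cancel₀ hc
      (show (z ^ (-3 : ℤ) / 2) * (s - t) = (z ^ (-3 : ℤ) / 2) * 0 from by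
        rw [mul_zero]; linear_combination h2)
  exact ⟨by linear_combination (hs + ht) / 2, by linear_combination (hs - ht) / 2⟩
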